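/- arXiv:1101.0136 — 5 statements merged into one kernel-verified Lean document; each statement's English description precedes it below -/
import Mathlib

section
/- For the Möbius automorphism M_α(ζ) = (α - ζ)/(1 - conj(α)·ζ) of the unit disc with α ∈ Δ, α ≠ 0, and for 0 < R < 1, the rational function extending z ↦ 1 - |z|² from the circle Γ = {M_α(Rζ) : |ζ| = 1} has exactly one pole inside the disc bounded by Γ, a simple pole at the Euclidean center of Γ, and exactly one zero inside that disc, a simple zero at α. -/
/-!
Everything follows from one identity: completing the square in the Hermitian form
`|α - w|² - R² |1 - ᾱ w|²`, whose zero set is `M_α(sphere 0 R)` because `M_α` is an involution,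
gives `(1 - R²|α|²) (|w - c|² - ρ²)` for an explicit centre `c` and radius `ρ`.
Evaluating it at `w = α` and at `w = 1/ᾱ`, where one of the two terms vanishes, places `α` inside
and `1/ᾱ` outside the circle.
-/

open Complex Metric ComplexConjugate

noncomputable section

def mobius (α ζ : ℂ) : ℂ := (α - ζ) / (1 - conj α * ζ)

def mobiusCircleCenter (α : ℂ) (R : ℝ) : ℂ :=
  ((1 - R ^ 2) / (1 - R ^ 2 * normSq α) : ℝ) * α

def mobiusCircleRadius (α : ℂ) (R : ℝ) : ℝ :=
  R * (1 - normSq α) / (1 - R ^ 2 * normSq α)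

end

section NormSq

variable {z a : ℂ} {r : ℝ}

theorem mem_sphere_iff_normSq (hr : 0 ≤ r) : z ∈ sphere a r ↔ normSq (z - a) = r ^ 2 := by
  rw [mem_sphere_iff_norm, normSq_eq_norm_sq, sq_eq_sq₀ (norm_nonneg _) hr]

theorem mem_ball_iff_normSq (hr : 0 ≤ r) : z ∈ ball a r ↔ normSq (z - a) < r ^ 2 := by
  rw [mem_ball_iff_norm, normSq_eq_norm_sq, sq_lt_sq₀ (norm_nonneg _) hr]

theorem mem_closedBall_iff_normSq (hr : 0 ≤ r) :
    z ∈ closedBall a r ↔ normSq (z - a) ≤ r ^ 2 := by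
  rw [mem_closedBall_iff_norm, normSq_eq_norm_sq, sq_le_sq₀ (norm_nonneg _) hr]

theorem conj_eq_add_sq_div_of_mem_sphere (hz : z ∈ sphere a r) :
    conj z = conj a + (r : ℂ) ^ 2 / (z - a) := by
  rcases eq_or_ne z a with rfl | hza
  · simp
  have h : (z - a) * conj (z - a) = (r : ℂ) ^ 2 := by
    rw [mul_conj', mem_sphere_iff_norm.1 hz]
  rw [← h, mul_div_cancel_left₀ _ (sub_ne_zero.2 hza), map_sub]
  ring

theorem normSq_one_sub_conj_mul_self : normSq (1 - conj a * a) = (1 - normSq a) ^ 2 := by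
  rw [← normSq_eq_conj_mul_self, ← ofReal_one, ← ofReal_sub, normSq_ofReal, sq]

theorem ne_inv_conj_of_normSq_ne_one (h0 : a ≠ 0) (h1 : normSq a ≠ 1) : a ≠ (conj a)⁻¹ := by
  intro h
  have h' : conj a * a = 1 := by
    nth_rewrite 2 [h]
    exact mul_inv_cancel₀ ((map_ne_zero _).2 h0)
  exact h1 (by exact_mod_cast normSq_eq_conj_mul_self.trans h')

end NormSq

section Mobius

variable {α w : ℂ}

theorem one_sub_conj_mul_mobius (hw : 1 - conj α * w ≠ 0) :
    1 - conj α * mobius α w = (1 - normSq α) / (1 - conj α * w) := by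
  rw [mobius, normSq_eq_conj_mul_self]
  field_simp
  ring

theorem mobius_mobius (hα : normSq α ≠ 1) (hw : 1 - conj α * w ≠ 0) :
    mobius α (mobius α w) = w := by
  have hα' : (1 : ℂ) - normSq α ≠ 0 := by exact_mod_cast sub_ne_zero.2 hα.symm
  have hw' : 1 - w * conj α ≠ 0 := by rwa [mul_comm]
  rw [mobius, one_sub_conj_mul_mobius hw, div_eq_iff (div_ne_zero hα' hw), mobius,
    normSq_eq_conj_mul_self]
  field_simp
  ring

theorem one_sub_conj_mul_ne_zero (hα : normSq α < 1) (hw : normSq w ≤ 1) :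
    1 - conj α * w ≠ 0 := by
  rw [sub_ne_zero]
  intro h
  have := congrArg normSq h
  rw [map_mul, normSq_conj, map_one] at this
  nlinarith [normSq_nonneg α, normSq_nonneg w]

end Mobius

section MobiusCircle

variable {α w : ℂ} {R : ℝ}

theorem one_sub_sq_mul_normSq_pos (hR0 : 0 ≤ R) (hR1 : R < 1) (hα : normSq α < 1) :
    0 < 1 - R ^ 2 * normSq α := by
  nlinarith [normSq_nonneg α, mul_nonneg hR0 hR0]

theorem mobiusCircleRadius_nonneg (hR0 : 0 ≤ R) (hR1 : R < 1) (hα : normSq α < 1) :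
    0 ≤ mobiusCircleRadius α R :=
  div_nonneg (mul_nonneg hR0 (by linarith)) (one_sub_sq_mul_normSq_pos hR0 hR1 hα).le

theorem mobiusCircleRadius_pos (hR0 : 0 < R) (hR1 : R < 1) (hα : normSq α < 1) :
    0 < mobiusCircleRadius α R :=
  div_pos (mul_pos hR0 (by linarith)) (one_sub_sq_mul_normSq_pos hR0.le hR1 hα)

theorem normSq_sub_sub_sq_mul_normSq (α w : ℂ) (hD : 1 - R ^ 2 * normSq α ≠ 0) :
    normSq (α - w) - R ^ 2 * normSq (1 - conj α * w) =
      (1 - R ^ 2 * normSq α) *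
        (normSq (w - mobiusCircleCenter α R) - mobiusCircleRadius α R ^ 2) := by
  have hD' : (1 : ℂ) - conj α * α * R ^ 2 ≠ 0 := by
    rw [← normSq_eq_conj_mul_self, mul_comm]; exact_mod_cast hD
  apply ofReal_injective
  simp only [mobiusCircleCenter, mobiusCircleRadius]
  push_cast
  simp only [normSq_eq_conj_mul_self, map_sub, map_mul, map_div₀, conj_ofReal, map_one, map_pow,
    conj_conj]
  field_simp
  ring

theorem mobius_mem_sphere_zero_iff (hR0 : 0 ≤ R) (hR1 : R < 1) (hα : normSq α < 1)
    (hw : 1 - conj α * w ≠ 0) :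
    mobius α w ∈ sphere 0 R ↔ w ∈ sphere (mobiusCircleCenter α R) (mobiusCircleRadius α R) := by
  have hD := one_sub_sq_mul_normSq_pos hR0 hR1 hα
  rw [mem_sphere_iff_normSq hR0, mem_sphere_iff_normSq (mobiusCircleRadius_nonneg hR0 hR1 hα),
    sub_zero, mobius, map_div₀, div_eq_iff (normSq_pos.2 hw).ne', ← sub_eq_zero,
    normSq_sub_sub_sq_mul_normSq α w hD.ne', mul_eq_zero, or_iff_right hD.ne', sub_eq_zero]

theorem one_sub_conj_mul_ne_zero_of_mem_mobiusCircle (hR0 : 0 ≤ R) (hR1 : R < 1)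
    (hα : normSq α < 1) (hw : w ∈ sphere (mobiusCircleCenter α R) (mobiusCircleRadius α R)) :
    1 - conj α * w ≠ 0 := by
  -- if `ᾱ w = 1`, the identity at `w` forces `w = α`, hence `|α| = 1`
  intro h0
  have key := normSq_sub_sub_sq_mul_normSq α w (one_sub_sq_mul_normSq_pos hR0 hR1 hα).ne'
  rw [h0, map_zero, mul_zero, sub_zero,
    (mem_sphere_iff_normSq (mobiusCircleRadius_nonneg hR0 hR1 hα)).1 hw, sub_self, mul_zero,
    map_eq_zero, sub_eq_zero] at key
  rw [← key, ← normSq_eq_conj_mul_self] at h0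
  exact hα.ne (by exact_mod_cast (sub_eq_zero.1 h0).symm)

theorem mobiusCircle_eq_image (hR0 : 0 ≤ R) (hR1 : R < 1) (hα : normSq α < 1) :
    sphere (mobiusCircleCenter α R) (mobiusCircleRadius α R) = mobius α '' sphere 0 R := by
  ext w
  constructor
  · intro hw
    have hw0 := one_sub_conj_mul_ne_zero_of_mem_mobiusCircle hR0 hR1 hα hw
    exact ⟨mobius α w, (mobius_mem_sphere_zero_iff hR0 hR1 hα hw0).2 hw,
      mobius_mobius hα.ne hw0⟩
  · rintro ⟨ζ, hζ, rfl⟩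
    have hζR : normSq ζ = R ^ 2 := by simpa using (mem_sphere_iff_normSq hR0).1 hζ
    have hζ0 : 1 - conj α * ζ ≠ 0 := one_sub_conj_mul_ne_zero hα (by nlinarith)
    have hw0 : 1 - conj α * mobius α ζ ≠ 0 := by
      rw [one_sub_conj_mul_mobius hζ0]
      exact div_ne_zero (by exact_mod_cast sub_ne_zero.2 hα.ne') hζ0
    rwa [← mobius_mem_sphere_zero_iff hR0 hR1 hα hw0, mobius_mobius hα.ne hζ0]

theorem mem_ball_mobiusCircle (hR0 : 0 < R) (hR1 : R < 1) (hα : normSq α < 1) :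
    α ∈ ball (mobiusCircleCenter α R) (mobiusCircleRadius α R) := by
  have hD := one_sub_sq_mul_normSq_pos hR0.le hR1 hα
  have key := normSq_sub_sub_sq_mul_normSq α α hD.ne'
  rw [sub_self, map_zero, normSq_one_sub_conj_mul_self, zero_sub] at key
  rw [mem_ball_iff_normSq (mobiusCircleRadius_nonneg hR0.le hR1 hα), ← sub_neg]
  refine neg_of_mul_neg_right (key ▸ neg_neg_of_pos ?_) hD.le
  have : 0 < 1 - normSq α := by linarith
  positivity

theorem inv_conj_notMem_closedBall_mobiusCircle (hα0 : α ≠ 0) (hR0 : 0 ≤ R) (hR1 : R < 1)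
    (hα : normSq α < 1) :
    (conj α)⁻¹ ∉ closedBall (mobiusCircleCenter α R) (mobiusCircleRadius α R) := by
  have hD := one_sub_sq_mul_normSq_pos hR0 hR1 hα
  have key := normSq_sub_sub_sq_mul_normSq α (conj α)⁻¹ hD.ne'
  rw [mul_inv_cancel₀ ((map_ne_zero _).2 hα0), sub_self, map_zero, mul_zero, sub_zero] at key
  rw [mem_closedBall_iff_normSq (mobiusCircleRadius_nonneg hR0 hR1 hα), not_le, ← sub_pos]
  refine pos_of_mul_pos_right (key ▸ normSq_pos.2 ?_) hD.le
  exact sub_ne_zero.2 (ne_inv_conj_of_normSq_ne_one hα0 hα.ne)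

theorem mobiusCircleCenter_ne_zero (hα0 : α ≠ 0) (hR0 : 0 ≤ R) (hR1 : R < 1)
    (hα : normSq α < 1) : mobiusCircleCenter α R ≠ 0 := by
  have hD := one_sub_sq_mul_normSq_pos hR0 hR1 hα
  refine mul_ne_zero (ofReal_ne_zero.2 (div_ne_zero ?_ hD.ne')) hα0
  nlinarith

theorem mobiusCircleCenter_ne_self (hα0 : α ≠ 0) (hR0 : 0 < R) (hR1 : R < 1)
    (hα : normSq α < 1) : mobiusCircleCenter α R ≠ α := by
  have hD := one_sub_sq_mul_normSq_pos hR0.le hR1 hα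
  rw [mobiusCircleCenter, Ne, mul_eq_right₀ hα0, ofReal_eq_one, div_eq_one_iff_eq hD.ne']
  nlinarith [mul_pos (pow_pos hR0 2) (sub_pos.2 hα)]

-- the numerator of the extension `1 - z (c̄ + ρ² / (z - c))` of `1 - |z|²` from the circle
theorem mobiusCircle_extension_numerator_eq (hα0 : α ≠ 0) (hD : 1 - R ^ 2 * normSq α ≠ 0)
    (z : ℂ) :
    (z - mobiusCircleCenter α R) * (1 - z * conj (mobiusCircleCenter α R)) -
        z * (mobiusCircleRadius α R : ℂ) ^ 2 =
      -conj (mobiusCircleCenter α R) * (z - α) * (z - (conj α)⁻¹) := by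
  have hD' : (1 : ℂ) - R ^ 2 * conj α * α ≠ 0 := by
    rw [mul_assoc, ← normSq_eq_conj_mul_self]; exact_mod_cast hD
  have hα0' : conj α ≠ 0 := (map_ne_zero _).2 hα0
  simp only [mobiusCircleCenter, mobiusCircleRadius, map_mul, conj_ofReal]
  push_cast
  rw [normSq_eq_conj_mul_self]
  field_simp
  ring

end MobiusCircle

/-- For `α ∈ Δ`, `α ≠ 0`, `0 < R < 1`, the circle `Γ = {M_α(Rζ) : |ζ|=1}` is a Euclidean
circle `sphere c ρ`; the rational extension of `1-|z|²` from `Γ` has numerator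
`-(conj c)(z-α)(z-1/conj α)`, with a simple zero at `α` inside the disc (the other zero
`1/conj α` lying outside the closed disc) and a simple pole at the Euclidean center `c`. -/
theorem stmt1 (α : ℂ) (hα : α ∈ ball (0:ℂ) 1) (hα0 : α ≠ 0)
    (R : ℝ) (hR0 : 0 < R) (hR1 : R < 1) :
    ∃ c : ℂ, ∃ ρ : ℝ, 0 < ρ ∧
      sphere c ρ = (fun ζ => (α - ζ) / (1 - starRingEnd ℂ α * ζ)) '' sphere (0:ℂ) R ∧
      (∀ ζ ∈ sphere c ρ,
        (1 : ℂ) - ζ * starRingEnd ℂ ζ = 1 - ζ * (starRingEnd ℂ c + (ρ:ℂ)^2 / (ζ - c))) ∧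
      (∀ z : ℂ, (z - c) * (1 - z * starRingEnd ℂ c) - z * (ρ:ℂ)^2
        = -(starRingEnd ℂ c) * (z - α) * (z - (starRingEnd ℂ α)⁻¹)) ∧
      α ∈ ball c ρ ∧
      (starRingEnd ℂ α)⁻¹ ∉ closedBall c ρ ∧
      α ≠ (starRingEnd ℂ α)⁻¹ ∧
      starRingEnd ℂ c ≠ 0 ∧
      -(starRingEnd ℂ c) * (c - α) * (c - (starRingEnd ℂ α)⁻¹) ≠ 0 := by
  have hα1 : normSq α < 1 := by simpa using (mem_ball_iff_normSq zero_le_one).1 hα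
  have hD := one_sub_sq_mul_normSq_pos hR0.le hR1 hα1
  have hρ := mobiusCircleRadius_pos hR0 hR1 hα1
  have hout := inv_conj_notMem_closedBall_mobiusCircle hα0 hR0.le hR1 hα1
  have hc0 : conj (mobiusCircleCenter α R) ≠ 0 :=
    (map_ne_zero _).2 (mobiusCircleCenter_ne_zero hα0 hR0.le hR1 hα1)
  have hc_ne_inv : mobiusCircleCenter α R ≠ (conj α)⁻¹ :=
    ne_of_mem_of_not_mem (mem_closedBall_self hρ.le) hout
  refine ⟨mobiusCircleCenter α R, mobiusCircleRadius α R, hρ,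
    mobiusCircle_eq_image hR0.le hR1 hα1,
    fun ζ hζ => by rw [conj_eq_add_sq_div_of_mem_sphere hζ],
    mobiusCircle_extension_numerator_eq hα0 hD.ne', mem_ball_mobiusCircle hR0 hR1 hα1, hout,
    ne_inv_conj_of_normSq_ne_one hα0 hα1.ne, hc0, ?_⟩
  exact mul_ne_zero (mul_ne_zero (neg_ne_zero.2 hc0)
    (sub_ne_zero.2 (mobiusCircleCenter_ne_self hα0 hR0 hR1 hα1))) (sub_ne_zero.2 hc_ne_inv)
end

section
/- Let I ⊂ ℝ be an interval, n ∈ ℕ, and let Φ : bΔ × I → ℂ be continuous such that for each t ∈ I the function ζ ↦ Φ(ζ,t) extends holomorphically through Δ \ {0} with a pole at 0 of degree ≤ n. Then the extension has the form Φ̃(ζ,t) = d_0(t)/ζ^n + ... + d_{n-1}(t)/ζ + Θ(ζ,t) for ζ ∈ closure(Δ) \ {0}, where each d_j is continuous on I, Θ is continuous on closure(Δ) × I, and ζ ↦ Θ(ζ,t) is holomorphic on Δ for each t. -/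
/-!
Multiplying by `ζ ^ n` turns the extension `Φ̃(·, t)` into a function `H_t` holomorphic on `Δ`
and continuous on its closure, with boundary values `ζ ^ n Φ(ζ, t)`; by the maximum principle it
is determined by them. Peeling off Taylor coefficients by iterated difference quotients at `0`,
`H_t ζ = ∑_{j<n} d_j(t) ζ ^ j + ζ ^ n Θ(ζ, t)`. Each difference quotient at most doubles the sup
norm on the closed disc (maximum principle again), so the uniform closeness of `Φ(·, t)` to
`Φ(·, t₀)` on the compact circle propagates to `d_j` and `Θ`, which gives joint continuity.
-/

open Complex Metric Filter Function Set Topology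

section Dslope

variable {𝕜 E : Type*} [NontriviallyNormedField 𝕜] [NormedAddCommGroup E] [NormedSpace 𝕜 E]

theorem eq_sum_add_pow_smul_iterate_dslope (f : 𝕜 → E) (c z : 𝕜) (m : ℕ) :
    f z = ∑ j ∈ Finset.range m, (z - c) ^ j • (swap dslope c)^[j] f c
      + (z - c) ^ m • (swap dslope c)^[m] f z := by
  induction m with
  | zero => simp
  | succ m ih =>
    set F := (swap dslope c)^[m] f
    have hF : F z = F c + (z - c) • dslope F c z := by rw [sub_smul_dslope]; abel
    rw [ih, hF, Finset.sum_range_succ, iterate_succ_apply', smul_add, smul_smul, ← pow_succ,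
      add_assoc]

theorem dslope_sub {f g : 𝕜 → E} {c : 𝕜} (hf : DifferentiableAt 𝕜 f c)
    (hg : DifferentiableAt 𝕜 g c) : dslope (f - g) c = dslope f c - dslope g c := by
  ext z
  rcases eq_or_ne z c with rfl | hz
  · simp only [dslope_same, Pi.sub_apply]
    exact deriv_sub hf hg
  · simp only [dslope_of_ne _ hz, slope_def_module, Pi.sub_apply, smul_sub]
    abel

end Dslope

section MaximumModulus

variable {E : Type*} [NormedAddCommGroup E] [NormedSpace ℂ E] {f g : ℂ → E} {c : ℂ} {R δ : ℝ}

theorem DiffContOnCl.eqOn_closedBall_of_eqOn_sphere (hf : DiffContOnCl ℂ f (ball c R))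
    (hg : DiffContOnCl ℂ g (ball c R)) (hR : R ≠ 0) (hfg : EqOn f g (sphere c R)) :
    EqOn f g (closedBall c R) := by
  simpa only [closure_ball c hR] using
    Complex.eqOn_closure_of_eqOn_frontier isBounded_ball hf hg (by rwa [frontier_ball c hR])

theorem DiffContOnCl.norm_le_of_forall_mem_sphere_norm_le (hf : DiffContOnCl ℂ f (ball c R))
    (hR : R ≠ 0) (hδ : ∀ z ∈ sphere c R, ‖f z‖ ≤ δ) {z : ℂ} (hz : z ∈ closedBall c R) :
    ‖f z‖ ≤ δ :=
  Complex.norm_le_of_forall_mem_frontier_norm_le isBounded_ball hf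
    (by rwa [frontier_ball c hR]) (by rwa [closure_ball c hR])

theorem DiffContOnCl.norm_dslope_le_of_mem_sphere (hf : DiffContOnCl ℂ f (ball c R))
    (hR : 0 < R) (hδ : ∀ z ∈ sphere c R, ‖f z‖ ≤ δ) {z : ℂ} (hz : z ∈ sphere c R) :
    ‖dslope f c z‖ ≤ 2 / R * δ := by
  have hfc : ‖f c‖ ≤ δ :=
    hf.norm_le_of_forall_mem_sphere_norm_le hR.ne' hδ (mem_closedBall_self hR.le)
  rw [dslope_of_ne _ (ne_of_mem_sphere hz hR.ne'), slope_def_module, norm_smul, norm_inv,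
    mem_sphere_iff_norm.mp hz, div_mul_eq_mul_div, ← inv_mul_eq_div]
  gcongr
  calc ‖f z - f c‖ ≤ ‖f z‖ + ‖f c‖ := norm_sub_le _ _
    _ ≤ 2 * δ := by linarith [hδ z hz]

end MaximumModulus

section IterateDslope

variable {E : Type*} [NormedAddCommGroup E] [NormedSpace ℂ E] [CompleteSpace E]
  {f g : ℂ → E} {s : Set ℂ} {c : ℂ} {R δ : ℝ}

theorem diffContOnCl_dslope (hc : s ∈ 𝓝 c) :
    DiffContOnCl ℂ (dslope f c) s ↔ DiffContOnCl ℂ f s :=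
  ⟨fun h => ⟨h.differentiableOn.of_dslope, h.continuousOn.of_dslope⟩, fun hf =>
    ⟨(differentiableOn_dslope hc).mpr hf.differentiableOn,
      (continuousOn_dslope (mem_of_superset hc subset_closure)).mpr
        ⟨hf.continuousOn, hf.differentiableOn.differentiableAt hc⟩⟩⟩

theorem DiffContOnCl.iterate_dslope (hf : DiffContOnCl ℂ f s) (hc : s ∈ 𝓝 c) (m : ℕ) :
    DiffContOnCl ℂ ((swap dslope c)^[m] f) s := by
  induction m with
  | zero => exact hf
  | succ m ih => rw [iterate_succ_apply']; exact (diffContOnCl_dslope hc).mpr ih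

theorem DiffContOnCl.iterate_dslope_sub (hf : DiffContOnCl ℂ f s) (hg : DiffContOnCl ℂ g s)
    (hc : s ∈ 𝓝 c) (m : ℕ) :
    (swap dslope c)^[m] (f - g) = (swap dslope c)^[m] f - (swap dslope c)^[m] g := by
  induction m with
  | zero => rfl
  | succ m ih =>
    simp only [iterate_succ_apply', ih]
    exact dslope_sub ((hf.iterate_dslope hc m).differentiableOn.differentiableAt hc)
      ((hg.iterate_dslope hc m).differentiableOn.differentiableAt hc)

theorem DiffContOnCl.norm_iterate_dslope_le (hf : DiffContOnCl ℂ f (ball c R)) (hR : 0 < R)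
    (hδ : ∀ z ∈ sphere c R, ‖f z‖ ≤ δ) (m : ℕ) {z : ℂ} (hz : z ∈ closedBall c R) :
    ‖(swap dslope c)^[m] f z‖ ≤ (2 / R) ^ m * δ := by
  induction m generalizing z with
  | zero => simpa using hf.norm_le_of_forall_mem_sphere_norm_le hR.ne' hδ hz
  | succ m ih =>
    have hc := ball_mem_nhds c hR
    refine (hf.iterate_dslope hc (m + 1)).norm_le_of_forall_mem_sphere_norm_le hR.ne'
      (fun w hw => ?_) hz
    rw [iterate_succ_apply', pow_succ', mul_assoc]
    exact (hf.iterate_dslope hc m).norm_dslope_le_of_mem_sphere hR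
      (fun v hv => ih (sphere_subset_closedBall hv)) hw

end IterateDslope

section UniformInParameter

variable {α β E : Type*} [TopologicalSpace α] [TopologicalSpace β] [UniformSpace E]
  {F : β → α → E} {K : Set α} {I : Set β}

theorem IsCompact.tendstoUniformlyOn_of_continuousOn_prod (hK : IsCompact K)
    (hF : ContinuousOn (fun p : α × β => F p.2 p.1) (K ×ˢ I)) {t₀ : β} (ht₀ : t₀ ∈ I) :
    TendstoUniformlyOn F (F t₀) (𝓝[I] t₀) K := by
  intro u hu
  obtain ⟨v, hv, hvu⟩ := hK.mem_uniformity_of_prod (f := F)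
    (hF.comp continuous_swap.continuousOn fun p hp => ⟨hp.2, hp.1⟩) ht₀ (symm_le_uniformity hu)
  filter_upwards [hv] with t ht z hz using hvu t ht z hz

theorem continuousOn_prod_of_tendstoUniformlyOn (hslice : ∀ t ∈ I, ContinuousOn (F t) K)
    (hunif : ∀ t ∈ I, TendstoUniformlyOn F (F t) (𝓝[I] t) K) :
    ContinuousOn (fun p : α × β => F p.2 p.1) (K ×ˢ I) := by
  rintro ⟨z, t⟩ ⟨hz, ht⟩
  have hsnd : Tendsto Prod.snd (𝓝[K ×ˢ I] (z, t)) (𝓝[I] t) :=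
    continuous_snd.continuousWithinAt.tendsto_nhdsWithin fun p hp => hp.2
  have hfst : Tendsto Prod.fst (𝓝[K ×ˢ I] (z, t)) (𝓝[K] z) :=
    continuous_fst.continuousWithinAt.tendsto_nhdsWithin fun p hp => hp.1
  have hunif' : TendstoUniformlyOn (fun p : α × β => F p.2) (F t) (𝓝[K ×ˢ I] (z, t)) K :=
    fun u hu => hsnd.eventually (hunif t ht u hu)
  exact hunif'.tendsto_comp (hslice t ht z hz) hfst

end UniformInParameter

section IterateDslopeFamily

variable {β E : Type*} [NormedAddCommGroup E] [NormedSpace ℂ E] [CompleteSpace E]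
  {H : β → ℂ → E} {c : ℂ} {R : ℝ}

theorem tendstoUniformlyOn_iterate_dslope {l : Filter β} {t₀ : β} (hR : 0 < R)
    (hH : ∀ᶠ t in l, DiffContOnCl ℂ (H t) (ball c R)) (hH₀ : DiffContOnCl ℂ (H t₀) (ball c R))
    (hlim : TendstoUniformlyOn H (H t₀) l (sphere c R)) (m : ℕ) :
    TendstoUniformlyOn (fun t => (swap dslope c)^[m] (H t)) ((swap dslope c)^[m] (H t₀)) l
      (closedBall c R) := by
  rw [Metric.tendstoUniformlyOn_iff] at hlim ⊢
  intro ε hε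
  have hδ : 0 < ε / 2 / (2 / R) ^ m := by positivity
  filter_upwards [hlim _ hδ, hH] with t ht hHt z hz
  have hdiff := (hH₀.sub hHt).norm_iterate_dslope_le hR
    (fun w hw => by simpa [dist_eq_norm] using (ht w hw).le) m hz
  rw [hH₀.iterate_dslope_sub hHt (ball_mem_nhds c hR), mul_div_cancel₀ _ (by positivity)] at hdiff
  rw [dist_eq_norm]
  exact hdiff.trans_lt (half_lt_self hε)

theorem continuousOn_iterate_dslope [TopologicalSpace β] {I : Set β} (hR : 0 < R)
    (hH : ∀ t ∈ I, DiffContOnCl ℂ (H t) (ball c R))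
    (hcont : ContinuousOn (fun p : ℂ × β => H p.2 p.1) (sphere c R ×ˢ I)) (m : ℕ) :
    ContinuousOn (fun p : ℂ × β => (swap dslope c)^[m] (H p.2) p.1) (closedBall c R ×ˢ I) := by
  refine continuousOn_prod_of_tendstoUniformlyOn (F := fun t => (swap dslope c)^[m] (H t))
    (fun t ht => ?_) (fun t ht => ?_)
  · simpa only [closure_ball c hR.ne'] using
      ((hH t ht).iterate_dslope (ball_mem_nhds c hR) m).continuousOn
  · exact tendstoUniformlyOn_iterate_dslope hR (eventually_nhdsWithin_of_forall hH) (hH t ht)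
      ((isCompact_sphere c R).tendstoUniformlyOn_of_continuousOn_prod hcont ht) m

end IterateDslopeFamily

theorem exists_diffContOnCl_eq_pow_mul {n : ℕ} {R : ℝ} (hR : 0 < R) {g h : ℂ → ℂ}
    (hg : ContinuousOn g (closedBall 0 R \ {0})) (hh : DifferentiableOn ℂ h (ball 0 R))
    (hgh : ∀ z ∈ ball 0 R, z ≠ 0 → g z = h z / z ^ n) :
    ∃ H : ℂ → ℂ, DiffContOnCl ℂ H (ball 0 R) ∧ ∀ z ∈ closedBall 0 R \ {0}, H z = z ^ n * g z := by
  classical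
  set H : ℂ → ℂ := fun z => if z ∈ ball 0 R then h z else z ^ n * g z
  have hHh : EqOn H h (ball 0 R) := fun z hz => if_pos hz
  have hHg : ∀ z ∈ closedBall 0 R \ {0}, H z = z ^ n * g z := by
    rintro z ⟨-, hz⟩
    by_cases hzR : z ∈ ball 0 R
    · rw [hHh hzR, hgh z hzR hz, mul_div_cancel₀ _ (pow_ne_zero n hz)]
    · exact if_neg hzR
  have hHd : DifferentiableOn ℂ H (ball 0 R) := hh.congr hHh
  refine ⟨H, ⟨hHd, ?_⟩, hHg⟩
  rw [closure_ball 0 hR.ne']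
  intro z hz
  rcases eq_or_ne z 0 with rfl | hz0
  · exact (hHd.differentiableAt (ball_mem_nhds 0 hR)).continuousAt.continuousWithinAt
  · rw [← continuousWithinAt_sdiff_singleton (y := 0)]
    exact (((continuous_pow n).continuousOn.mul hg).congr hHg) z ⟨hz, hz0⟩

theorem eq_sum_div_pow_add_of_pow_mul_eq {n : ℕ} {ζ a b : ℂ} (d : ℕ → ℂ) (hζ : ζ ≠ 0)
    (h : ζ ^ n * a = ∑ j ∈ Finset.range n, ζ ^ j * d j + ζ ^ n * b) :
    a = ∑ j : Fin n, d j / ζ ^ (n - (j : ℕ)) + b := by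
  have hsum : ∑ j : Fin n, d j / ζ ^ (n - (j : ℕ))
      = (∑ j ∈ Finset.range n, ζ ^ j * d j) / ζ ^ n := by
    rw [Fin.sum_univ_eq_sum_range (fun j => d j / ζ ^ (n - j)), Finset.sum_div]
    refine Finset.sum_congr rfl fun j hj => ?_
    rw [← Nat.add_sub_cancel' (Finset.mem_range.mp hj).le, pow_add, Nat.add_sub_cancel_left,
      mul_div_mul_left _ _ (pow_ne_zero j hζ)]
  rw [hsum, div_add' _ _ _ (pow_ne_zero n hζ), eq_div_iff (pow_ne_zero n hζ)]
  linear_combination h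

theorem stmt4_general (n : ℕ) (I : Set ℝ) (Φ : ℂ → ℝ → ℂ)
    (hΦ : ContinuousOn (fun p : ℂ × ℝ => Φ p.1 p.2) (sphere (0:ℂ) 1 ×ˢ I))
    (hext : ∀ t ∈ I, ∃ g : ℂ → ℂ,
      ContinuousOn g (closedBall (0:ℂ) 1 \ {0}) ∧
      DifferentiableOn ℂ g (ball (0:ℂ) 1 \ {0}) ∧
      (∀ ζ ∈ sphere (0:ℂ) 1, g ζ = Φ ζ t) ∧
      ∃ h : ℂ → ℂ, DifferentiableOn ℂ h (ball (0:ℂ) 1) ∧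
        ∀ z ∈ ball (0:ℂ) 1, z ≠ 0 → g z = h z / z ^ n) :
    ∃ d : Fin n → ℝ → ℂ, ∃ Θ : ℂ → ℝ → ℂ,
      (∀ j, ContinuousOn (d j) I) ∧
      ContinuousOn (fun p : ℂ × ℝ => Θ p.1 p.2) (closedBall (0:ℂ) 1 ×ˢ I) ∧
      (∀ t ∈ I, DifferentiableOn ℂ (fun ζ => Θ ζ t) (ball (0:ℂ) 1)) ∧
      (∀ t ∈ I, ∀ g : ℂ → ℂ,
        (ContinuousOn g (closedBall (0:ℂ) 1 \ {0}) ∧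
         DifferentiableOn ℂ g (ball (0:ℂ) 1 \ {0}) ∧
         (∀ ζ ∈ sphere (0:ℂ) 1, g ζ = Φ ζ t) ∧
         ∃ h : ℂ → ℂ, DifferentiableOn ℂ h (ball (0:ℂ) 1) ∧
           ∀ z ∈ ball (0:ℂ) 1, z ≠ 0 → g z = h z / z ^ n) →
        ∀ ζ ∈ closedBall (0:ℂ) 1 \ {0},
          g ζ = (∑ j : Fin n, d j t / ζ ^ (n - (j : ℕ))) + Θ ζ t) := by
  have hsphere : sphere (0:ℂ) 1 ⊆ closedBall 0 1 \ {0} := fun ζ hζ =>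
    ⟨sphere_subset_closedBall hζ, ne_of_mem_sphere hζ one_ne_zero⟩
  have hH : ∀ t ∈ I, ∃ H : ℂ → ℂ, DiffContOnCl ℂ H (ball 0 1) ∧
      ∀ ζ ∈ sphere (0:ℂ) 1, H ζ = ζ ^ n * Φ ζ t := by
    intro t ht
    obtain ⟨g, hgc, -, hgΦ, h, hhd, hgh⟩ := hext t ht
    obtain ⟨H, hHd, hHg⟩ := exists_diffContOnCl_eq_pow_mul one_pos hgc hhd hgh
    exact ⟨H, hHd, fun ζ hζ => by rw [hHg ζ (hsphere hζ), hgΦ ζ hζ]⟩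
  choose! H hHd hHΦ using hH
  have hcont : ∀ m, ContinuousOn (fun p : ℂ × ℝ => (swap dslope 0)^[m] (H p.2) p.1)
      (closedBall 0 1 ×ˢ I) :=
    continuousOn_iterate_dslope one_pos hHd <|
      ((continuous_fst.pow n).continuousOn.mul hΦ).congr fun p hp => hHΦ p.2 hp.2 p.1 hp.1
  refine ⟨fun j t => (swap dslope 0)^[j] (H t) 0, fun ζ t => (swap dslope 0)^[n] (H t) ζ,
    fun j => ?_, hcont n,
    fun t ht => ((hHd t ht).iterate_dslope (ball_mem_nhds 0 one_pos) n).differentiableOn, ?_⟩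
  · exact (hcont j).comp (continuousOn_const.prodMk continuousOn_id)
      fun t ht => ⟨mem_closedBall_self zero_le_one, ht⟩
  · rintro t ht g ⟨hgc, -, hgΦ, h, hhd, hgh⟩ ζ hζ
    obtain ⟨G, hGd, hGg⟩ := exists_diffContOnCl_eq_pow_mul one_pos hgc hhd hgh
    have hGH : G ζ = H t ζ := hGd.eqOn_closedBall_of_eqOn_sphere (hHd t ht) one_ne_zero
      (fun z hz => by rw [hGg z (hsphere hz), hgΦ z hz, hHΦ t ht z hz]) hζ.1
    rw [hGg ζ hζ, eq_sum_add_pow_smul_iterate_dslope (H t) 0 ζ n] at hGH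
    simp only [sub_zero, smul_eq_mul] at hGH
    exact eq_sum_div_pow_add_of_pow_mul_eq _ hζ.2 hGH

/-- If `Φ` is continuous on `bΔ × I` and for each `t ∈ I` the slice extends
holomorphically through `Δ \ {0}` with a pole of degree ≤ n at 0, then any such
extension has the form `Σ_{j<n} d_j(t)/ζ^{n-j} + Θ(ζ,t)` with `d_j` continuous on `I`,
`Θ` jointly continuous on `closure(Δ) × I` and holomorphic in `ζ` for each `t`. -/
theorem stmt4 (n : ℕ) (I : Set ℝ) (hI : I.OrdConnected) (Φ : ℂ → ℝ → ℂ)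
    (hΦ : ContinuousOn (fun p : ℂ × ℝ => Φ p.1 p.2) (sphere (0:ℂ) 1 ×ˢ I))
    (hext : ∀ t ∈ I, ∃ g : ℂ → ℂ,
      ContinuousOn g (closedBall (0:ℂ) 1 \ {0}) ∧
      DifferentiableOn ℂ g (ball (0:ℂ) 1 \ {0}) ∧
      (∀ ζ ∈ sphere (0:ℂ) 1, g ζ = Φ ζ t) ∧
      ∃ h : ℂ → ℂ, DifferentiableOn ℂ h (ball (0:ℂ) 1) ∧
        ∀ z ∈ ball (0:ℂ) 1, z ≠ 0 → g z = h z / z ^ n) :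
    ∃ d : Fin n → ℝ → ℂ, ∃ Θ : ℂ → ℝ → ℂ,
      (∀ j, ContinuousOn (d j) I) ∧
      ContinuousOn (fun p : ℂ × ℝ => Θ p.1 p.2) (closedBall (0:ℂ) 1 ×ˢ I) ∧
      (∀ t ∈ I, DifferentiableOn ℂ (fun ζ => Θ ζ t) (ball (0:ℂ) 1)) ∧
      (∀ t ∈ I, ∀ g : ℂ → ℂ,
        (ContinuousOn g (closedBall (0:ℂ) 1 \ {0}) ∧
         DifferentiableOn ℂ g (ball (0:ℂ) 1 \ {0}) ∧
         (∀ ζ ∈ sphere (0:ℂ) 1, g ζ = Φ ζ t) ∧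
         ∃ h : ℂ → ℂ, DifferentiableOn ℂ h (ball (0:ℂ) 1) ∧
           ∀ z ∈ ball (0:ℂ) 1, z ≠ 0 → g z = h z / z ^ n) →
        ∀ ζ ∈ closedBall (0:ℂ) 1 \ {0},
          g ζ = (∑ j : Fin n, d j t / ζ ^ (n - (j : ℕ))) + Θ ζ t) :=
  stmt4_general n I Φ hΦ hext
end

section
/- Let 0 < t < 1 and ρ(λ)² = (λ-t)(λ-1/t) for 0 ≤ λ < t, and set φ(z,λ) = λ + ρ(λ)²/(z-λ). Let H_0, ..., H_n be holomorphic near 0. If for each λ ∈ (0,t) the function z ↦ H_0(z) + H_1(z)φ(z,λ) + ... + H_n(z)φ(z,λ)^n has a zero of order ≥ n at z = 0, then each H_j has a zero of order ≥ n at 0. -/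
/-!
Induct on the order `k`. Once every `H_j` vanishes to order `k` at `0`, write `H_j = z^k G_j`;
the hypothesis then forces `Σ_j G_j(0) φ(0,l)^j = 0` for every `l ∈ (0,t)`. Since
`φ(0,l) = t + 1/t - 1/l` takes infinitely many values, the polynomial with coefficients `G_j(0)`
vanishes, so every `H_j` vanishes to order `k + 1`.
-/

open Filter Topology Polynomial

theorem Polynomial.eq_zero_of_forall_sum_mul_pow_eq_zero {R : Type*} [CommRing R] [IsDomain R]
    {n : ℕ} {c : Fin n → R} {S : Set R} (hS : S.Infinite)
    (h : ∀ x ∈ S, ∑ j, c j * x ^ (j : ℕ) = 0) : c = 0 := by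
  classical
  have hroots : S ⊆ {x | (ofFn n c).IsRoot x} := fun x hx => by
    simpa [IsRoot, ofFn_eq_sum_monomial, eval_finsetSum] using h x hx
  exact injective_ofFn n <| ((ofFn n c).eq_zero_of_infinite_isRoot (hS.mono hroots)).trans
    (map_zero _).symm

section AnalyticOrder

variable {𝕜 : Type*} [NontriviallyNormedField 𝕜]

theorem natCast_add_one_le_analyticOrderAt_iff {E : Type*} [NormedAddCommGroup E]
    [NormedSpace 𝕜 E] {f g : 𝕜 → E} {z₀ : 𝕜} {k : ℕ} (hg : AnalyticAt 𝕜 g z₀)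
    (hfg : ∀ᶠ z in 𝓝 z₀, f z = (z - z₀) ^ k • g z) :
    ((k + 1 : ℕ) : ℕ∞) ≤ analyticOrderAt f z₀ ↔ g z₀ = 0 := by
  have hord : analyticOrderAt f z₀ = k + analyticOrderAt g z₀ := by
    rw [analyticOrderAt_congr hfg, ← analyticOrderAt_centeredMonomial (n := k) (z₀ := z₀)]
    exact analyticOrderAt_smul (by fun_prop) hg
  rw [hord, Nat.cast_add, Nat.cast_one, ENat.add_le_add_iff_left (ENat.natCast_ne_top k),
    Order.one_le_iff_ne_zero, hg.analyticOrderAt_ne_zero]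

theorem le_analyticOrderAt_of_le_analyticOrderAt_sum_mul_pow {ι : Type*} {m n : ℕ}
    {H : Fin m → 𝕜 → 𝕜} (hH : ∀ j, AnalyticAt 𝕜 (H j) 0) {g : ι → 𝕜 → 𝕜} {s : Set ι}
    (hg : ∀ i ∈ s, AnalyticAt 𝕜 (g i) 0) (hs : ((fun i => g i 0) '' s).Infinite)
    (hF : ∀ i ∈ s, (n : ℕ∞) ≤ analyticOrderAt (fun z => ∑ j, H j z * g i z ^ (j : ℕ)) 0)
    (j : Fin m) : (n : ℕ∞) ≤ analyticOrderAt (H j) 0 := by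
  suffices ∀ k ≤ n, ∀ j, (k : ℕ∞) ≤ analyticOrderAt (H j) 0 from this n le_rfl j
  intro k
  induction k with
  | zero => simp
  | succ k ih =>
    intro hk
    choose G hG hHG using fun j => (natCast_le_analyticOrderAt (hH j)).1 (ih (by omega) j)
    have hvanish : ∀ x ∈ (fun i => g i 0) '' s, ∑ j, G j 0 * x ^ (j : ℕ) = 0 := by
      rintro _ ⟨i, hi, rfl⟩
      have hfactor : ∀ᶠ z in 𝓝 0, ∑ j, H j z * g i z ^ (j : ℕ) =
          (z - 0) ^ k • ∑ j, G j z * g i z ^ (j : ℕ) := by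
        filter_upwards [eventually_all.2 hHG] with z hz
        simp only [hz, smul_eq_mul, Finset.mul_sum, mul_assoc]
      refine (natCast_add_one_le_analyticOrderAt_iff ?_ hfactor).1
        ((Nat.cast_le.2 hk).trans (hF i hi))
      exact Finset.analyticAt_fun_sum _ fun j _ => (hG j).mul ((hg i hi).pow _)
    have hG0 := eq_zero_of_forall_sum_mul_pow_eq_zero hs hvanish
    exact fun j => (natCast_add_one_le_analyticOrderAt_iff (hG j) (hHG j)).2 (congrFun hG0 j)

end AnalyticOrder

section Pencil

/-- The paper's `φ(z, l) = l + ρ(l)² / (z - l)`, with `ρ(l)² = (l - t)(l - 1/t)`. -/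
noncomputable def pencilMap (t l : ℝ) (z : ℂ) : ℂ :=
  l + (((l - t) * (l - 1 / t) : ℝ) : ℂ) / (z - l)

variable {t l : ℝ}

theorem analyticAt_pencilMap (hl : l ≠ 0) : AnalyticAt ℂ (pencilMap t l) 0 := by
  refine analyticAt_const.add (analyticAt_const.div (analyticAt_id.sub analyticAt_const) ?_)
  simpa using hl

theorem pencilMap_zero (ht : t ≠ 0) (hl : l ≠ 0) :
    pencilMap t l 0 = t + 1 / t - 1 / l := by
  have ht' : (t : ℂ) ≠ 0 := Complex.ofReal_ne_zero.2 ht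
  have hl' : (l : ℂ) ≠ 0 := Complex.ofReal_ne_zero.2 hl
  simp only [pencilMap]
  push_cast
  field_simp
  ring

theorem infinite_image_pencilMap_zero (ht : 0 < t) :
    ((fun l => pencilMap t l 0) '' Set.Ioo 0 t).Infinite := by
  refine (Set.Ioo_infinite ht).image fun a ha b hb hab => ?_
  simp only [pencilMap_zero ht.ne' ha.1.ne', pencilMap_zero ht.ne' hb.1.ne'] at hab
  exact_mod_cast inv_injective (by simpa using hab)

end Pencil

theorem stmt10_general (n : ℕ) (t : ℝ) (ht0 : 0 < t)
    (H : Fin (n+1) → ℂ → ℂ) (hH : ∀ j, AnalyticAt ℂ (H j) 0)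
    (hzero : ∀ l ∈ Set.Ioo (0:ℝ) t, ∀ k < n,
      iteratedDeriv k (fun z : ℂ =>
        ∑ j : Fin (n+1),
          H j z * ((l : ℂ) + (((l - t) * (l - 1/t) : ℝ) : ℂ) / (z - (l : ℂ))) ^ (j : ℕ)) 0
        = 0) :
    ∀ j, ∀ k < n, iteratedDeriv k (H j) 0 = 0 := by
  have hφ : ∀ l ∈ Set.Ioo (0:ℝ) t, AnalyticAt ℂ (pencilMap t l) 0 :=
    fun l hl => analyticAt_pencilMap hl.1.ne'
  have hF : ∀ l ∈ Set.Ioo (0:ℝ) t,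
      (n : ℕ∞) ≤ analyticOrderAt (fun z => ∑ j, H j z * pencilMap t l z ^ (j : ℕ)) 0 :=
    fun l hl => (natCast_le_analyticOrderAt_iff_iteratedDeriv_eq_zero
      (Finset.analyticAt_fun_sum _ fun j _ => (hH j).mul ((hφ l hl).pow _))).2 (hzero l hl)
  intro j
  exact (natCast_le_analyticOrderAt_iff_iteratedDeriv_eq_zero (hH j)).1
    (le_analyticOrderAt_of_le_analyticOrderAt_sum_mul_pow hH hφ
      (infinite_image_pencilMap_zero ht0) hF j)

/-- Let `0 < t < 1`, `ρ(l)² = (l-t)(l-1/t)` and `φ(z,l) = l + ρ(l)²/(z-l)`. If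
`H_0,…,H_n` are holomorphic near `0` and for each `l ∈ (0,t)` the function
`z ↦ Σ_j H_j(z) φ(z,l)^j` has a zero of order ≥ n at `0`, then each `H_j` has a zero
of order ≥ n at `0`. -/
theorem stmt10 (n : ℕ) (t : ℝ) (ht0 : 0 < t) (ht1 : t < 1)
    (H : Fin (n+1) → ℂ → ℂ) (hH : ∀ j, AnalyticAt ℂ (H j) 0)
    (hzero : ∀ l ∈ Set.Ioo (0:ℝ) t, ∀ k < n,
      iteratedDeriv k (fun z : ℂ =>
        ∑ j : Fin (n+1),
          H j z * ((l : ℂ) + (((l - t) * (l - 1/t) : ℝ) : ℂ) / (z - (l : ℂ))) ^ (j : ℕ)) 0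
        = 0) :
    ∀ j, ∀ k < n, iteratedDeriv k (H j) 0 = 0 :=
  stmt10_general n t ht0 H hH hzero
end

section
/- The function g(z,w) = |w|² on the unit sphere bB ⊂ ℂ² extends holomorphically into the unit ball B along each complex line through the origin and along each complex line parallel to a coordinate axis meeting B, yet g does not extend holomorphically through B. -/
open Complex Metric

/-! The boundary values of `g` on each of the lines named in the statement are constant, so the
constant function extends them. A holomorphic extension `G` through the ball, however, restricts
to the discs `z = 0` and `w = 0`, where `g` is identically `1` and `0` on the boundary circle; by
the maximum principle `G (0, 0)` would then be both `1` and `0`. -/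

theorem Complex.eq_of_diffContOnCl_ball_of_eqOn_sphere {E F : Type*} [NormedAddCommGroup E]
    [NormedSpace ℂ E] [Nontrivial E] [NormedAddCommGroup F] [NormedSpace ℂ F]
    {f : E → F} {c : E} {r : ℝ} (hr : 0 < r) (hf : DiffContOnCl ℂ f (ball c r)) {a : F}
    (ha : ∀ z ∈ sphere c r, f z = a) : f c = a := by
  refine Complex.eqOn_of_eqOn_frontier isBounded_ball hf (diffContOnCl_const (c := a)) ?_
    (mem_ball_self hr)
  rw [frontier_ball c hr.ne']
  exact ha

theorem diffContOnCl_comp_of_isometry {G : ℂ × ℂ → ℂ}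
    (hGc : ContinuousOn G {p | ‖p.1‖^2 + ‖p.2‖^2 ≤ 1})
    (hGd : DifferentiableOn ℂ G {p | ‖p.1‖^2 + ‖p.2‖^2 < 1}) (φ : ℂ →L[ℂ] ℂ × ℂ)
    (hφ : ∀ ζ, ‖(φ ζ).1‖^2 + ‖(φ ζ).2‖^2 = ‖ζ‖^2) :
    DiffContOnCl ℂ (G ∘ φ) (ball 0 1) := by
  refine ⟨hGd.comp φ.differentiableOn fun ζ hζ => ?_, ?_⟩
  · have : ‖ζ‖ < 1 := mem_ball_zero_iff.mp hζ
    simp only [Set.mem_ofPred_eq, hφ]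
    nlinarith [norm_nonneg ζ]
  · rw [closure_ball 0 one_ne_zero]
    refine hGc.comp φ.continuous.continuousOn fun ζ hζ => ?_
    have : ‖ζ‖ ≤ 1 := mem_closedBall_zero_iff.mp hζ
    simp only [Set.mem_ofPred_eq, hφ]
    nlinarith [norm_nonneg ζ]

/-- `g(z,w) = |w|²` on the unit sphere of `ℂ²` extends holomorphically into the ball
along every complex line through the origin and along every complex line parallel to a
coordinate axis meeting the ball, yet `g` does not extend holomorphically through the
ball. -/
theorem stmt18 :
    (∀ a b : ℂ, ‖a‖^2 + ‖b‖^2 = 1 →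
      ∃ h : ℂ → ℂ, ContinuousOn h (closedBall (0:ℂ) 1) ∧
        DifferentiableOn ℂ h (ball (0:ℂ) 1) ∧
        ∀ ζ ∈ sphere (0:ℂ) 1, h ζ = ((‖b * ζ‖^2 : ℝ) : ℂ)) ∧
    (∀ cz : ℂ, ‖cz‖ < 1 →
      ∃ h : ℂ → ℂ, ContinuousOn h (closedBall (0:ℂ) (Real.sqrt (1 - ‖cz‖^2))) ∧
        DifferentiableOn ℂ h (ball (0:ℂ) (Real.sqrt (1 - ‖cz‖^2))) ∧
        ∀ w ∈ sphere (0:ℂ) (Real.sqrt (1 - ‖cz‖^2)), h w = ((‖w‖^2 : ℝ) : ℂ)) ∧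
    (∀ cw : ℂ, ‖cw‖ < 1 →
      ∃ h : ℂ → ℂ, ContinuousOn h (closedBall (0:ℂ) (Real.sqrt (1 - ‖cw‖^2))) ∧
        DifferentiableOn ℂ h (ball (0:ℂ) (Real.sqrt (1 - ‖cw‖^2))) ∧
        ∀ z ∈ sphere (0:ℂ) (Real.sqrt (1 - ‖cw‖^2)), h z = ((‖cw‖^2 : ℝ) : ℂ)) ∧
    ¬ ∃ G : ℂ × ℂ → ℂ,
        ContinuousOn G {p : ℂ × ℂ | ‖p.1‖^2 + ‖p.2‖^2 ≤ 1} ∧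
        DifferentiableOn ℂ G {p : ℂ × ℂ | ‖p.1‖^2 + ‖p.2‖^2 < 1} ∧
        ∀ p : ℂ × ℂ, ‖p.1‖^2 + ‖p.2‖^2 = 1 → G p = ((‖p.2‖^2 : ℝ) : ℂ) := by
  refine ⟨fun a b _ => ?_, fun cz hcz => ?_, fun cw _ => ?_, ?_⟩
  · refine ⟨fun _ => ((‖b‖^2 : ℝ) : ℂ), continuousOn_const, differentiableOn_const _,
      fun ζ hζ => ?_⟩
    rw [norm_mul, mem_sphere_zero_iff_norm.mp hζ, mul_one]
  · have hr : (0:ℝ) ≤ 1 - ‖cz‖^2 := by nlinarith [norm_nonneg cz]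
    refine ⟨fun _ => ((1 - ‖cz‖^2 : ℝ) : ℂ), continuousOn_const, differentiableOn_const _,
      fun w hw => ?_⟩
    rw [mem_sphere_zero_iff_norm.mp hw, Real.sq_sqrt hr]
  · exact ⟨fun _ => ((‖cw‖^2 : ℝ) : ℂ), continuousOn_const, differentiableOn_const _,
      fun _ _ => rfl⟩
  · rintro ⟨G, hGc, hGd, hGb⟩
    have hG₁ : G (0, 0) = 1 := by
      refine Complex.eq_of_diffContOnCl_ball_of_eqOn_sphere
        (f := G ∘ ContinuousLinearMap.inr ℂ ℂ ℂ) one_pos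
        (diffContOnCl_comp_of_isometry hGc hGd _ fun ζ => by simp) fun w hw => ?_
      have hw : ‖w‖ = 1 := mem_sphere_zero_iff_norm.mp hw
      simpa [hw] using hGb (0, w) (by simp [hw])
    have hG₀ : G (0, 0) = 0 := by
      refine Complex.eq_of_diffContOnCl_ball_of_eqOn_sphere
        (f := G ∘ ContinuousLinearMap.inl ℂ ℂ ℂ) one_pos
        (diffContOnCl_comp_of_isometry hGc hGd _ fun ζ => by simp) fun z hz => ?_
      have hz : ‖z‖ = 1 := mem_sphere_zero_iff_norm.mp hz
      simpa using hGb (z, 0) (by simp [hz])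
    exact one_ne_zero (hG₁.symm.trans hG₀)
end

section
/- Let f be continuous on the unit sphere bB ⊂ ℂ², and for z ∈ Δ define c_m(z) = (1-|z|²)^{-m/2} · (1/2π) ∫_{-π}^{π} e^{-imθ} f(z, e^{iθ}√(1-|z|²)) dθ for m ∈ ℤ. Then each c_m is continuous on Δ, and for m < 0, the function (1-|z|²)^{|m|/2} c_m(z) extends continuously to the closed disc with boundary value 0; moreover (z,w) ↦ w^m c_m(z) (the m-th Fourier term of f) extends continuously to bB. -/
open Complex Metric

/-!
Extend `f` continuously to all of `ℂ²` (Tietze) and consider, for every `(z, w)`, the `m`-th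
Fourier coefficient `G_m(z, w)` of `θ ↦ f(z, e^{iθ} w)`. It depends continuously on `(z, w)`
by continuity of parametric integrals, and the change of variables `θ ↦ θ + φ` over a full
period gives `G_m(z, e^{iφ} w) = e^{imφ} G_m(z, w)`, hence `G_m(z, w) = wᵐ |w|⁻ᵐ G_m(z, |w|)`.
On the sphere `|w| = √(1-|z|²)`, so `G_m` is the Fourier term `wᵐ c_m(z)`, and
`c_m(z) = (1-|z|²)^{-m/2} G_m(z, √(1-|z|²))`, from which all three claims follow.
-/

open Set Function
open scoped Real

universe u v

theorem ContinuousOn.exists_continuous_eqOn_of_isClosed {X : Type u} {Y : Type v}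
    [TopologicalSpace X] [NormalSpace X] [TopologicalSpace Y] [TietzeExtension.{u, v} Y]
    {s : Set X} (hs : IsClosed s) {f : X → Y} (hf : ContinuousOn f s) :
    ∃ F : X → Y, Continuous F ∧ EqOn F f s := by
  obtain ⟨F, hF⟩ := ContinuousMap.exists_restrict_eq hs ⟨s.domRestrict f, hf.domRestrict⟩
  exact ⟨F, F.continuous, fun x hx => ContinuousMap.congr_fun hF ⟨x, hx⟩⟩

theorem Function.Periodic.intervalIntegral_comp_add_right {E : Type*} [NormedAddCommGroup E]
    [NormedSpace ℝ E] {k : ℝ → E} {T : ℝ} (hk : Periodic k T) (t φ : ℝ) :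
    ∫ θ in t..t + T, k (θ + φ) = ∫ θ in t..t + T, k θ := by
  rw [intervalIntegral.integral_comp_add_right, add_right_comm, hk.intervalIntegral_add_eq]

section CircleFourierTerm

variable {X : Type*}

noncomputable def circleFourierTerm (F : X × ℂ → ℂ) (m : ℤ) (p : X × ℂ) : ℂ :=
  (2 * π)⁻¹ • ∫ θ in -π..π, exp (-(m : ℂ) * I * θ) * F (p.1, exp (θ * I) * p.2)

theorem continuous_circleFourierTerm [TopologicalSpace X] {F : X × ℂ → ℂ} (hF : Continuous F)
    (m : ℤ) : Continuous (circleFourierTerm F m) := by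
  unfold circleFourierTerm
  fun_prop

theorem circleFourierTerm_exp_mul_I_mul (F : X × ℂ → ℂ) (m : ℤ) (x : X) (w : ℂ) (φ : ℝ) :
    circleFourierTerm F m (x, exp (φ * I) * w)
      = exp (m * φ * I) * circleFourierTerm F m (x, w) := by
  set k : ℝ → ℂ := fun θ => exp (-(m : ℂ) * I * θ) * F (x, exp (θ * I) * w)
  have hk : Periodic k (2 * π) := by
    intro θ
    have hexp : exp (((θ + 2 * π : ℝ) : ℂ) * I) = exp (θ * I) := by
      push_cast; exact exp_mul_I_periodic θ
    have hchar : exp (-(m : ℂ) * I * ((θ + 2 * π : ℝ) : ℂ)) = exp (-(m : ℂ) * I * θ) := by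
      rw [show -(m : ℂ) * I * ((θ + 2 * π : ℝ) : ℂ)
          = -(m : ℂ) * I * θ + (-m : ℤ) * (2 * π * I) by push_cast; ring,
        exp_add, exp_int_mul_two_pi_mul_I, mul_one]
    simp only [k, hexp, hchar]
  have hshift : ∀ θ : ℝ, exp (-(m : ℂ) * I * θ) * F (x, exp (θ * I) * (exp (φ * I) * w))
      = exp (m * φ * I) * k (θ + φ) := by
    intro θ
    simp only [k]
    push_cast
    rw [add_mul, exp_add (θ * I), mul_assoc (exp (θ * I)), ← mul_assoc (exp (m * φ * I)),
      ← exp_add]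
    congr 2
    ring
  have hperiod := hk.intervalIntegral_comp_add_right (-π) φ
  rw [show -π + 2 * π = π by ring] at hperiod
  simp only [circleFourierTerm, hshift, intervalIntegral.integral_const_mul, hperiod,
    mul_smul_comm]
  rfl

theorem circleFourierTerm_eq_zpow_mul (F : X × ℂ → ℂ) (m : ℤ) (x : X) {w : ℂ} (hw : w ≠ 0) :
    circleFourierTerm F m (x, w)
      = w ^ m * ((‖w‖ : ℂ) ^ (-m) * circleFourierTerm F m (x, ‖w‖)) := by
  have hnorm : (‖w‖ : ℂ) ≠ 0 := ofReal_ne_zero.mpr (norm_ne_zero_iff.mpr hw)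
  have hcancel : (‖w‖ : ℂ) ^ m * (‖w‖ : ℂ) ^ (-m) = 1 := by
    rw [← zpow_add₀ hnorm, add_neg_cancel, zpow_zero]
  have hzpow : w ^ m = (‖w‖ : ℂ) ^ m * exp (m * arg w * I) := by
    conv_lhs => rw [← norm_mul_exp_arg_mul_I w]
    rw [mul_zpow, ← exp_int_mul, mul_assoc]
  conv_lhs => rw [← norm_mul_exp_arg_mul_I w, mul_comm, circleFourierTerm_exp_mul_I_mul]
  rw [hzpow]
  linear_combination (-(exp (m * arg w * I) * circleFourierTerm F m (x, ‖w‖))) * hcancel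

end CircleFourierTerm

theorem norm_sq_add_norm_exp_mul_sqrt_sq {z : ℂ} (hz : ‖z‖ ≤ 1) (θ : ℝ) :
    ‖z‖ ^ 2 + ‖exp (θ * I) * ((√(1 - ‖z‖ ^ 2) : ℝ) : ℂ)‖ ^ 2 = 1 := by
  rw [norm_mul, norm_exp_ofReal_mul_I, one_mul, norm_real, Real.norm_eq_abs, sq_abs,
    Real.sq_sqrt (by nlinarith [norm_nonneg z])]
  ring

/-- Fourier coefficients of a continuous function on the unit sphere of `ℂ²`:
each `c_m` is continuous on `Δ`; for `m < 0` the function `(1-|z|²)^{|m|/2} c_m(z)`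
extends continuously to the closed disc with boundary value `0`; and each Fourier term
`(z,w) ↦ wᵐ c_m(z)` extends continuously to the sphere. -/
theorem stmt19 (f : ℂ × ℂ → ℂ)
    (hf : ContinuousOn f {p : ℂ × ℂ | ‖p.1‖^2 + ‖p.2‖^2 = 1})
    (c : ℤ → ℂ → ℂ)
    (hc : ∀ m : ℤ, ∀ z ∈ ball (0:ℂ) 1,
      c m z = ((Real.sqrt (1 - ‖z‖^2) : ℝ) : ℂ) ^ (-m) *
        ((2 * Real.pi)⁻¹ • ∫ θ in (-Real.pi)..Real.pi,
          Complex.exp (-(m : ℂ) * Complex.I * (θ : ℂ)) *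
            f (z, Complex.exp ((θ : ℂ) * Complex.I) * ((Real.sqrt (1 - ‖z‖^2) : ℝ) : ℂ)))) :
    (∀ m : ℤ, ContinuousOn (c m) (ball (0:ℂ) 1)) ∧
    (∀ m : ℤ, m < 0 → ∃ g : ℂ → ℂ, ContinuousOn g (closedBall (0:ℂ) 1) ∧
      (∀ z ∈ ball (0:ℂ) 1, g z = ((Real.sqrt (1 - ‖z‖^2) : ℝ) : ℂ) ^ (-m) * c m z) ∧
      (∀ z ∈ sphere (0:ℂ) 1, g z = 0)) ∧
    (∀ m : ℤ, ∃ h : ℂ × ℂ → ℂ,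
      ContinuousOn h {p : ℂ × ℂ | ‖p.1‖^2 + ‖p.2‖^2 = 1} ∧
      ∀ z w : ℂ, ‖z‖^2 + ‖w‖^2 = 1 → w ≠ 0 → h (z, w) = w ^ m * c m z) := by
  obtain ⟨F, hF, hFf⟩ :=
    hf.exists_continuous_eqOn_of_isClosed (isClosed_eq (by fun_prop) continuous_const)
  set s : ℂ → ℂ := fun z => ((√(1 - ‖z‖ ^ 2) : ℝ) : ℂ)
  have hs : Continuous s := by fun_prop
  have hG : ∀ m, Continuous fun z => circleFourierTerm F m (z, s z) := fun m =>
    (continuous_circleFourierTerm hF m).comp (continuous_id.prodMk hs)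
  have hcF : ∀ m, ∀ z ∈ ball (0 : ℂ) 1, c m z = s z ^ (-m) * circleFourierTerm F m (z, s z) := by
    intro m z hz
    rw [hc m z hz, circleFourierTerm]
    congr 3 with θ
    rw [hFf (norm_sq_add_norm_exp_mul_sqrt_sq (mem_ball_zero_iff.mp hz).le θ)]
  refine ⟨fun m => ?_, fun m hm => ?_, fun m => ?_⟩
  · have hs_ne : ∀ z ∈ ball (0 : ℂ) 1, s z ≠ 0 := fun z hz => by
      have := mem_ball_zero_iff.mp hz
      simp only [s, ne_eq, ofReal_eq_zero, Real.sqrt_eq_zero', not_le, sub_pos]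
      nlinarith [norm_nonneg z]
    exact ((hs.continuousOn.zpow₀ (-m) fun z hz => Or.inl (hs_ne z hz)).mul
      (hG m).continuousOn).congr (hcF m)
  · have hs_zpow := hs.zpow₀ (-m) fun _ => Or.inr (by omega)
    refine ⟨fun z => s z ^ (-m) * (s z ^ (-m) * circleFourierTerm F m (z, s z)),
      (hs_zpow.mul (hs_zpow.mul (hG m))).continuousOn, fun z hz => by rw [hcF m z hz],
      fun z hz => ?_⟩
    simp [s, mem_sphere_zero_iff_norm.mp hz, zero_zpow _ (neg_ne_zero.mpr hm.ne)]
  · refine ⟨circleFourierTerm F m, (continuous_circleFourierTerm hF m).continuousOn,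
      fun z w hzw hw => ?_⟩
    have hz : z ∈ ball (0 : ℂ) 1 := mem_ball_zero_iff.mpr (by nlinarith [norm_pos_iff.mpr hw])
    have hsw : s z = ‖w‖ := by
      simp only [s, show 1 - ‖z‖ ^ 2 = ‖w‖ ^ 2 by linarith, Real.sqrt_sq (norm_nonneg w)]
    rw [circleFourierTerm_eq_zpow_mul F m z hw, hcF m z hz, hsw]
end
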